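/- For the root system E7 (in the realization below), let Λ = Ξ ∪ (Ξ + (1/2)(1,1,1,-1,-1,-1,0,0)) be the weight lattice. If λ ∈ Λ \ Ξ, then M_E7(λ) contains the vector λ* = (1,0,0,0,0,0,1/2,1/2). -/

import Mathlib

namespace TorusNormal

/-- `V n` is the rational vector space `ℚ^n`. -/
abbrev V (n : ℕ) := Fin n → ℚ

/-- The standard scalar product on `ℚ^n`. -/
def dot {n : ℕ} (x y : V n) : ℚ := ∑ i, x i * y i

lemma dot_add_right {n : ℕ} (α x y : V n) : dot α (x + y) = dot α x + dot α y := by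
  simp [dot, mul_add, Finset.sum_add_distrib]

lemma dot_smul_right {n : ℕ} (α : V n) (c : ℚ) (x : V n) : dot α (c • x) = c * dot α x := by
  simp [dot, Finset.mul_sum, mul_left_comm]

/-- The reflection `s_α : x ↦ x - (2(α,x)/(α,α))·α`, as a linear map. -/
def reflLin {n : ℕ} (α : V n) : V n →ₗ[ℚ] V n where
  toFun x := x - ((2 * dot α x) / dot α α) • α
  map_add' x y := by
    try dsimp only
    rw [dot_add_right,
      show (2 * (dot α x + dot α y)) / dot α α
        = (2 * dot α x) / dot α α + (2 * dot α y) / dot α α by ring, add_smul]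
    abel
  map_smul' c x := by
    try dsimp only
    rw [dot_smul_right]
    simp only [RingHom.id_apply]
    rw [smul_sub, smul_smul]
    congr 1
    congr 1
    ring

/-- The Weyl group of a root system `Φ`: the subgroup of `GL(ℚ^n)` generated by the
reflections `s_α`, `α ∈ Φ`. -/
def weylGroup {n : ℕ} (Φ : Set (V n)) : Subgroup (Module.End ℚ (V n))ˣ :=
  Subgroup.closure {g | ∃ α ∈ Φ, g.val = reflLin α}

/-- The orbit of `l` under the Weyl group of `Φ`. -/
def weylOrbit {n : ℕ} (Φ : Set (V n)) (l : V n) : Set (V n) :=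
  {x | ∃ g ∈ weylGroup Φ, x = g.val l}

/-- The weight polytope `P(λ)`: the convex hull of the Weyl orbit of `λ`. -/
def weightPolytope {n : ℕ} (Φ : Set (V n)) (l : V n) : Set (V n) :=
  convexHull ℚ (weylOrbit Φ l)

/-- `M(λ) = (λ + Ξ) ∩ P(λ)`, where `Ξ` is the root lattice (the ℤ-span of `Φ`). -/
def Mset {n : ℕ} (Φ : Set (V n)) (l : V n) : Set (V n) :=
  {x | x - l ∈ Submodule.span ℤ Φ ∧ x ∈ weightPolytope Φ l}

/-- `v` is a ℚ≥0-linear combination of elements of `S`. -/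
def InCone {n : ℕ} (S : Set (V n)) (v : V n) : Prop :=
  ∃ (t : Finset (V n)) (c : V n → ℚ),
    ↑t ⊆ S ∧ (∀ x ∈ t, 0 ≤ c x) ∧ v = ∑ x ∈ t, c x • x

/-- A set `S ⊆ ℚ^n` is saturated if every vector in the intersection of the ℤ-linear span
of `S` with the ℚ≥0-cone of `S` is a ℤ≥0-linear combination of elements of `S`
(equivalently, lies in the additive submonoid generated by `S`). -/
def IsSaturated {n : ℕ} (S : Set (V n)) : Prop :=
  ∀ v : V n, v ∈ Submodule.span ℤ S → InCone S v → v ∈ AddSubmonoid.closure S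

/-- A set is hereditarily normal if every subset is saturated. -/
def HereditarilyNormal {n : ℕ} (S : Set (V n)) : Prop :=
  ∀ T : Set (V n), T ⊆ S → IsSaturated T


/-- The root system `E₇`, realized in the subspace of `ℚ^8` orthogonal to `ε₇ - ε₈`:
the vectors `±εᵢ±εⱼ` (`1 ≤ i < j ≤ 6`), the vectors `±(ε₇+ε₈)`, and the vectors
`±(1/2)(ε₇+ε₈+Σ_{i=1}^{6}(-1)^{νᵢ}εᵢ)` with an even number of minus signs. -/
def e7roots : Set (V 8) :=
  {x | (∃ i j : Fin 8, i.val < 6 ∧ j.val < 6 ∧ i ≠ j ∧ ∃ a b : ℚ,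
          (a = 1 ∨ a = -1) ∧ (b = 1 ∨ b = -1) ∧
          x = a • (Pi.single i 1 : V 8) + b • (Pi.single j 1 : V 8)) ∨
       (x = Pi.single (6 : Fin 8) (1 : ℚ) + Pi.single 7 1 ∨
        x = -(Pi.single (6 : Fin 8) (1 : ℚ) + Pi.single 7 1)) ∨
       (∃ (e : ℚ) (s : Fin 8 → ℚ), (e = 1 ∨ e = -1) ∧ (∀ i, s i = 1 ∨ s i = -1) ∧
          s 6 = 1 ∧ s 7 = 1 ∧
          Even (Finset.univ.filter (fun i : Fin 8 => i.val < 6 ∧ s i = -1)).card ∧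
          x = (e / 2) • s)}

/-- `Ξ₀`: integer vectors with `ℓ₁+⋯+ℓ₆` even and `ℓ₇ = ℓ₈`. -/
def XiZeroE7 : Set (V 8) :=
  {v | (∀ i, ∃ m : ℤ, v i = (m : ℚ)) ∧
       (∃ m : ℤ, v 0 + v 1 + v 2 + v 3 + v 4 + v 5 = 2 * (m : ℚ)) ∧ v 6 = v 7}

/-- The root lattice of `E₇`: `Ξ = Ξ₀ ∪ (Ξ₀ + (1/2)(1,…,1))`. -/
def XiE7 : Set (V 8) :=
  XiZeroE7 ∪ {v | ∃ w ∈ XiZeroE7, v = w + fun _ => (1 / 2 : ℚ)}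

/-- The weight lattice of `E₇`: `Λ = Ξ ∪ (Ξ + (1/2)(1,1,1,-1,-1,-1,0,0))`. -/
def LamE7 : Set (V 8) :=
  XiE7 ∪ {v | ∃ w ∈ XiE7, v = w + ![1/2, 1/2, 1/2, -1/2, -1/2, -1/2, 0, 0]}



lemma dot_comm {n : ℕ} (x y : V n) : dot x y = dot y x := by
  simp [dot, mul_comm]

lemma dot_sub_right {n : ℕ} (α x y : V n) : dot α (x - y) = dot α x - dot α y := by
  simp [dot, mul_sub, Finset.sum_sub_distrib]

lemma dot_self_nonneg {n : ℕ} (x : V n) : 0 ≤ dot x x :=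
  Finset.sum_nonneg fun i _ => mul_self_nonneg _

lemma reflLin_apply {n : ℕ} (α x : V n) :
    reflLin α x = x - ((2 * dot α x) / dot α α) • α := rfl

lemma reflLin_invol {n : ℕ} (α : V n) (h : dot α α ≠ 0) (x : V n) :
    reflLin α (reflLin α x) = x := by
  rw [reflLin_apply, reflLin_apply, dot_sub_right, dot_smul_right]
  rw [show 2 * (dot α x - 2 * dot α x / dot α α * dot α α) / dot α α
      = -(2 * dot α x / dot α α) by field_simp; ring]
  rw [neg_smul]
  abel

def reflUnit {n : ℕ} (α : V n) (h : dot α α ≠ 0) : (Module.End ℚ (V n))ˣ where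
  val := reflLin α
  inv := reflLin α
  val_inv := LinearMap.ext fun x => reflLin_invol α h x
  inv_val := LinearMap.ext fun x => reflLin_invol α h x

lemma reflUnit_mem {n : ℕ} {Φ : Set (V n)} {α : V n} (hα : α ∈ Φ) (h : dot α α ≠ 0) :
    reflUnit α h ∈ weylGroup Φ :=
  Subgroup.subset_closure ⟨α, hα, rfl⟩

lemma self_mem_orbit {n : ℕ} (Φ : Set (V n)) (l : V n) : l ∈ weylOrbit Φ l :=
  ⟨1, one_mem _, rfl⟩

lemma orbit_smul_mem {n : ℕ} {Φ : Set (V n)} {l x : V n} {g : (Module.End ℚ (V n))ˣ}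
    (hg : g ∈ weylGroup Φ) (hx : x ∈ weylOrbit Φ l) : g.val x ∈ weylOrbit Φ l := by
  obtain ⟨g', hg', rfl⟩ := hx
  exact ⟨g * g', mul_mem hg hg', rfl⟩

lemma polytope_invariant {n : ℕ} {Φ : Set (V n)} {l x : V n} {g : (Module.End ℚ (V n))ˣ}
    (hg : g ∈ weylGroup Φ) (hx : x ∈ weightPolytope Φ l) :
    g.val x ∈ weightPolytope Φ l := by
  have h1 : g.val x ∈ (g.val : V n →ₗ[ℚ] V n) '' convexHull ℚ (weylOrbit Φ l) :=
    ⟨x, hx, rfl⟩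
  rw [LinearMap.image_convexHull (g.val : V n →ₗ[ℚ] V n)] at h1
  refine convexHull_mono ?_ h1
  rintro y ⟨z, hz, rfl⟩
  exact orbit_smul_mem hg hz

lemma self_mem_polytope {n : ℕ} (Φ : Set (V n)) (l : V n) : l ∈ weightPolytope Φ l :=
  subset_convexHull ℚ _ (self_mem_orbit Φ l)

lemma polytope_mono {n : ℕ} {Φ : Set (V n)} {l l' : V n}
    (h : l' ∈ weightPolytope Φ l) : weightPolytope Φ l' ⊆ weightPolytope Φ l := by
  apply convexHull_min
  · rintro x ⟨g, hg, rfl⟩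
    exact polytope_invariant hg h
  · exact convex_convexHull ℚ _

/-- Step lemma: if `α ∈ Φ`, `(α,α)=2`, and `(α,l) ≥ 1`, then `l - α ∈ P(l)`. -/
lemma step_mem_polytope {n : ℕ} {Φ : Set (V n)} {l α : V n} (hα : α ∈ Φ)
    (h2 : dot α α = 2) (h1 : 1 ≤ dot α l) : l - α ∈ weightPolytope Φ l := by
  set m := dot α l with hm
  have hm0 : m ≠ 0 := by positivity
  have hs : reflLin α l = l - m • α := by
    rw [reflLin_apply, h2]
    congr 1
    rw [show 2 * m / 2 = m by ring]
  have hrefl : (l - m • α) ∈ weightPolytope Φ l := by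
    have := orbit_smul_mem (reflUnit_mem hα (by rw [h2]; norm_num)) (self_mem_orbit Φ l)
    rw [show (reflUnit α _).val l = reflLin α l from rfl, hs] at this
    exact subset_convexHull ℚ _ this
  have hl : l ∈ weightPolytope Φ l := self_mem_polytope Φ l
  have hconv : Convex ℚ (weightPolytope Φ l) := convex_convexHull ℚ _
  have := hconv hl hrefl (a := 1 - 1/m) (b := 1/m)
    (by have : 1/m ≤ 1 := by rw [div_le_one (by linarith)]; linarith
        linarith)
    (by positivity) (by ring)
  convert this using 1
  rw [smul_sub, smul_smul]
  rw [show (1:ℚ)/m * m = 1 by field_simp]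
  rw [sub_smul, one_smul, one_smul]
  abel

lemma dot_add_left {n : ℕ} (x y z : V n) : dot (x + y) z = dot x z + dot y z := by
  simp [dot, add_mul, Finset.sum_add_distrib]

lemma dot_smul_left {n : ℕ} (c : ℚ) (x z : V n) : dot (c • x) z = c * dot x z := by
  simp [dot, Finset.mul_sum, mul_assoc]

lemma dot_neg_left {n : ℕ} (x z : V n) : dot (-x) z = -dot x z := by
  simp [dot, Finset.sum_neg_distrib]

lemma dot_single_left {n : ℕ} (i : Fin n) (c : ℚ) (x : V n) :
    dot (Pi.single i c) x = c * x i := by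
  rw [dot]
  rw [Finset.sum_eq_single i]
  · simp
  · intro b _ hb; simp [Pi.single_apply, hb]
  · simp

lemma dot_pm {n : ℕ} (i j : Fin n) (a b : ℚ) (x : V n) :
    dot (a • (Pi.single i 1 : V n) + b • (Pi.single j 1 : V n)) x = a * x i + b * x j := by
  rw [dot_add_left, dot_smul_left, dot_smul_left, dot_single_left, dot_single_left]
  ring

lemma dot_67 (x : V 8) :
    dot (Pi.single (6 : Fin 8) (1:ℚ) + Pi.single 7 1) x = x 6 + x 7 := by
  rw [dot_add_left, dot_single_left, dot_single_left]; ring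

lemma root_norm {α : V 8} (hα : α ∈ e7roots) : dot α α = 2 := by
  rcases hα with ⟨i, j, hi, hj, hij, a, b, ha, hb, rfl⟩ | (rfl | rfl) | ⟨e, s, he, hs, h6, h7, _, rfl⟩
  · rw [dot_pm]
    have h1 : (a • (Pi.single i 1 : V 8) + b • (Pi.single j 1 : V 8)) i = a := by
      simp [Pi.single_apply, hij.symm]
    have h2 : (a • (Pi.single i 1 : V 8) + b • (Pi.single j 1 : V 8)) j = b := by
      simp [Pi.single_apply, hij]
    rw [h1, h2]
    rcases ha with rfl | rfl <;> rcases hb with rfl | rfl <;> norm_num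
  · rw [dot_67]; norm_num [Pi.single_apply, (by decide : (6:Fin 8) ≠ 7), (by decide : (7:Fin 8) ≠ 6)]
  · rw [dot_neg_left, dot_comm, dot_neg_left, dot_67]; norm_num [Pi.single_apply, (by decide : (6:Fin 8) ≠ 7), (by decide : (7:Fin 8) ≠ 6)]
  · rw [dot_smul_left, dot_comm, dot_smul_left]
    have : dot s s = 8 := by
      have h : ∀ i, s i * s i = 1 := by
        intro i; rcases hs i with h | h <;> rw [h] <;> norm_num
      rw [dot, Fin.sum_univ_eight, h, h, h, h, h, h, h, h]; norm_num
    rw [this]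
    rcases he with rfl | rfl <;> norm_num

lemma int_abs_ge {q : ℚ} {k : ℤ} (h : q = (k : ℚ)) (h0 : q ≠ 0) : 1 ≤ q ∨ q ≤ -1 := by
  subst h
  have : k ≠ 0 := by exact_mod_cast h0
  rcases lt_or_gt_of_ne this with h | h
  · right
    have : k ≤ -1 := by omega
    calc (k:ℚ) ≤ ((-1 : ℤ) : ℚ) := by exact_mod_cast this
    _ = -1 := by norm_num
  · left
    have : 1 ≤ k := by omega
    exact_mod_cast this

/-- Membership helpers for e7roots -/
lemma mem_roots_pm {i j : Fin 8} (hi : i.val < 6) (hj : j.val < 6) (hij : i ≠ j)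
    {a b : ℚ} (ha : a = 1 ∨ a = -1) (hb : b = 1 ∨ b = -1) :
    a • (Pi.single i 1 : V 8) + b • (Pi.single j 1 : V 8) ∈ e7roots :=
  Or.inl ⟨i, j, hi, hj, hij, a, b, ha, hb, rfl⟩

lemma mem_roots_67 : (Pi.single (6:Fin 8) (1:ℚ) + Pi.single 7 1) ∈ e7roots :=
  Or.inr (Or.inl (Or.inl rfl))

lemma mem_roots_67' : -(Pi.single (6:Fin 8) (1:ℚ) + Pi.single 7 1) ∈ e7roots :=
  Or.inr (Or.inl (Or.inr rfl))

/-- other index below 6 -/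
lemma exists_other (i : Fin 8) (hi : i.val < 6) : ∃ j : Fin 8, j.val < 6 ∧ j ≠ i := by
  by_cases h : i = 0
  · exact ⟨1, by norm_num, by rw [h]; decide⟩
  · exact ⟨0, by norm_num, fun hc => h hc.symm⟩

/-- sign choice: for q with |q| ≥ c, exists a = ±1 with a*q = |q| ≥ c -/
lemma sign_choice {q c : ℚ} (h : c ≤ q ∨ q ≤ -c) :
    ∃ a : ℚ, (a = 1 ∨ a = -1) ∧ c ≤ a * q := by
  rcases h with h | h
  · exact ⟨1, Or.inl rfl, by linarith⟩
  · exact ⟨-1, Or.inr rfl, by linarith⟩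

/-- Claim D part 1: a "two coordinates" root. -/
lemma two_coord_root {ξ : V 8} {i j : Fin 8} (hi : i.val < 6) (hj : j.val < 6)
    (hij : i ≠ j) {c d : ℚ} (hci : c ≤ ξ i ∨ ξ i ≤ -c) (hdj : d ≤ ξ j ∨ ξ j ≤ -d) :
    ∃ α ∈ e7roots, c + d ≤ dot α ξ := by
  obtain ⟨a, ha, hc⟩ := sign_choice hci
  obtain ⟨b, hb, hd⟩ := sign_choice hdj
  refine ⟨_, mem_roots_pm hi hj hij ha hb, ?_⟩
  rw [dot_pm]
  linarith

lemma coord67_root {ξ : V 8} (h67 : ξ 6 = ξ 7) {c : ℚ} (h : c ≤ ξ 6 ∨ ξ 6 ≤ -c) :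
    ∃ α ∈ e7roots, 2 * c ≤ dot α ξ := by
  rcases h with h | h
  · refine ⟨_, mem_roots_67, ?_⟩
    rw [dot_67, ← h67]; linarith
  · refine ⟨_, mem_roots_67', ?_⟩
    rw [dot_neg_left, dot_67, ← h67]; linarith

lemma claimD_A {ξ : V 8} (hξ : ξ ∈ XiZeroE7) (h0 : ξ ≠ 0) :
    ∃ α ∈ e7roots, 2 ≤ dot α ξ := by
  obtain ⟨hint, ⟨m, hsum⟩, h67⟩ := hξ
  have habs : ∀ t, ξ t ≠ 0 → 1 ≤ ξ t ∨ ξ t ≤ -1 := fun t ht => by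
    obtain ⟨k, hk⟩ := hint t; exact int_abs_ge hk ht
  by_cases h6 : ξ 6 = 0
  · have hex : ∃ i : Fin 8, i.val < 6 ∧ ξ i ≠ 0 := by
      by_contra hc
      push_neg at hc
      apply h0
      funext t
      fin_cases t
      · exact hc 0 (by decide)
      · exact hc 1 (by decide)
      · exact hc 2 (by decide)
      · exact hc 3 (by decide)
      · exact hc 4 (by decide)
      · exact hc 5 (by decide)
      · exact h6
      · show ξ 7 = (0:ℚ)
        rw [← h67]; exact h6
    obtain ⟨i, hi, hine⟩ := hex
    by_cases hj : ∃ j : Fin 8, j.val < 6 ∧ j ≠ i ∧ ξ j ≠ 0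
    · obtain ⟨j, hj6, hjne, hjz⟩ := hj
      have h := two_coord_root hi hj6 (Ne.symm hjne) (habs i hine) (habs j hjz)
      obtain ⟨α, hα, hd⟩ := h
      exact ⟨α, hα, by linarith⟩
    · push_neg at hj
      have hz : ∀ j : Fin 8, j.val < 6 → j ≠ i → ξ j = 0 := hj
      have hsum2 : ξ i = 2 * (m : ℚ) := by
        fin_cases i
        · show ξ 0 = 2 * (m:ℚ)
          rw [hz 1 (by decide) (by decide), hz 2 (by decide) (by decide),
            hz 3 (by decide) (by decide), hz 4 (by decide) (by decide),
            hz 5 (by decide) (by decide)] at hsum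
          linarith
        · show ξ 1 = 2 * (m:ℚ)
          rw [hz 0 (by decide) (by decide), hz 2 (by decide) (by decide),
            hz 3 (by decide) (by decide), hz 4 (by decide) (by decide),
            hz 5 (by decide) (by decide)] at hsum
          linarith
        · show ξ 2 = 2 * (m:ℚ)
          rw [hz 0 (by decide) (by decide), hz 1 (by decide) (by decide),
            hz 3 (by decide) (by decide), hz 4 (by decide) (by decide),
            hz 5 (by decide) (by decide)] at hsum
          linarith
        · show ξ 3 = 2 * (m:ℚ)
          rw [hz 0 (by decide) (by decide), hz 1 (by decide) (by decide),
            hz 2 (by decide) (by decide), hz 4 (by decide) (by decide),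
            hz 5 (by decide) (by decide)] at hsum
          linarith
        · show ξ 4 = 2 * (m:ℚ)
          rw [hz 0 (by decide) (by decide), hz 1 (by decide) (by decide),
            hz 2 (by decide) (by decide), hz 3 (by decide) (by decide),
            hz 5 (by decide) (by decide)] at hsum
          linarith
        · show ξ 5 = 2 * (m:ℚ)
          rw [hz 0 (by decide) (by decide), hz 1 (by decide) (by decide),
            hz 2 (by decide) (by decide), hz 3 (by decide) (by decide),
            hz 4 (by decide) (by decide)] at hsum
          linarith
        · exact absurd hi (by decide)
        · exact absurd hi (by decide)
      have hbig : 2 ≤ ξ i ∨ ξ i ≤ -2 := by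
        obtain ⟨k, hk⟩ := hint i
        have hk2 : (k : ℚ) = 2 * (m : ℚ) := by rw [← hk]; exact hsum2
        have : k = 2 * m := by exact_mod_cast hk2
        have hkne : k ≠ 0 := by
          intro hcc; apply hine; rw [hk, hcc]; norm_num
        rcases (by omega : 2 ≤ k ∨ k ≤ -2) with h | h
        · left; rw [hk]; exact_mod_cast h
        · right; rw [hk]
          calc (k:ℚ) ≤ ((-2 : ℤ) : ℚ) := by exact_mod_cast h
          _ = -2 := by norm_num
      obtain ⟨j, hj6, hjne⟩ := exists_other i hi
      have hjz : ξ j = 0 := hz j hj6 hjne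
      obtain ⟨α, hα, hd⟩ := two_coord_root hi hj6 (Ne.symm hjne) hbig
        (Or.inl (by rw [hjz]) : (0:ℚ) ≤ ξ j ∨ ξ j ≤ -0)
      exact ⟨α, hα, by linarith⟩
  · obtain ⟨α, hα, hd⟩ := coord67_root h67 (habs 6 h6)
    exact ⟨α, hα, by linarith⟩

lemma claimD_B {w : V 8} (hw : w ∈ XiZeroE7) :
    ∃ α ∈ e7roots, 2 ≤ dot α (w + fun _ => (1/2 : ℚ)) := by
  set ξ : V 8 := w + fun _ => (1/2 : ℚ) with hξdef
  have hξ : ∀ t, ξ t = w t + 1/2 := fun t => rfl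
  obtain ⟨hint, ⟨m, hsum⟩, h67⟩ := hw
  choose k hk using hint
  have h67' : ξ 6 = ξ 7 := by rw [hξ, hξ, h67]
  by_cases hbig : ∃ i : Fin 8, i.val < 6 ∧ (1 ≤ k i ∨ k i ≤ -2)
  · obtain ⟨i, hi, hki⟩ := hbig
    have hci : 3/2 ≤ ξ i ∨ ξ i ≤ -(3/2) := by
      rcases hki with h | h
      · left
        have : (1:ℚ) ≤ (k i : ℚ) := by exact_mod_cast h
        rw [hξ, hk]; linarith
      · right
        have : ((k i : ℤ) : ℚ) ≤ ((-2 : ℤ) : ℚ) := by exact_mod_cast h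
        rw [hξ, hk]; push_cast at this ⊢; linarith
    obtain ⟨j, hj6, hjne⟩ := exists_other i hi
    have hcj : 1/2 ≤ ξ j ∨ ξ j ≤ -(1/2) := by
      rcases (by omega : 0 ≤ k j ∨ k j ≤ -1) with h | h
      · left
        have : (0:ℚ) ≤ (k j : ℚ) := by exact_mod_cast h
        rw [hξ, hk]; linarith
      · right
        have : ((k j : ℤ) : ℚ) ≤ ((-1 : ℤ) : ℚ) := by exact_mod_cast h
        rw [hξ, hk]; push_cast at this ⊢; linarith
    obtain ⟨α, hα, hd⟩ := two_coord_root hi hj6 (Ne.symm hjne) hci hcj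
    exact ⟨α, hα, by linarith⟩
  · by_cases h6big : 1 ≤ k 6 ∨ k 6 ≤ -2
    · have hc6 : 3/2 ≤ ξ 6 ∨ ξ 6 ≤ -(3/2) := by
        rcases h6big with h | h
        · left
          have : (1:ℚ) ≤ (k 6 : ℚ) := by exact_mod_cast h
          rw [hξ, hk]; linarith
        · right
          have : ((k 6 : ℤ) : ℚ) ≤ ((-2 : ℤ) : ℚ) := by exact_mod_cast h
          rw [hξ, hk]; push_cast at this ⊢; linarith
      obtain ⟨α, hα, hd⟩ := coord67_root h67' hc6
      exact ⟨α, hα, by linarith⟩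
    · push_neg at hbig h6big
      have hw01 : ∀ i : Fin 8, i.val < 6 → w i = 0 ∨ w i = -1 := by
        intro i hi
        obtain ⟨h1, h2⟩ := hbig i hi
        rcases (by omega : k i = 0 ∨ k i = -1) with h | h
        · left; rw [hk, h]; norm_num
        · right; rw [hk, h]; norm_num
      have hw6 : w 6 = 0 ∨ w 6 = -1 := by
        rcases (by omega : k 6 = 0 ∨ k 6 = -1) with h | h
        · left; rw [hk, h]; norm_num
        · right; rw [hk, h]; norm_num
      have hval : ∀ t : Fin 8, ξ t = 1/2 ∨ ξ t = -(1/2) := by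
        intro t
        by_cases ht : t.val < 6
        · rcases hw01 t ht with h | h
          · left; rw [hξ, h]; norm_num
          · right; rw [hξ, h]; norm_num
        · have ht2 : t.val = 6 ∨ t.val = 7 := by omega
          have ht3 : t = 6 ∨ t = 7 := by
            rcases ht2 with h | h
            · left; exact Fin.ext h
            · right; exact Fin.ext h
          have hv6 : ξ 6 = 1/2 ∨ ξ 6 = -(1/2) := by
            rcases hw6 with h | h
            · left; rw [hξ, h]; norm_num
            · right; rw [hξ, h]; norm_num
          rcases ht3 with rfl | rfl
          · exact hv6
          · rw [← h67']; exact hv6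
      -- the vector ξ itself is a root
      set σ : ℚ := 2 * ξ 6 with hσdef
      have hσ : σ = 1 ∨ σ = -1 := by
        rcases hval 6 with h | h
        · left; rw [hσdef, h]; norm_num
        · right; rw [hσdef, h]; norm_num
      set s : Fin 8 → ℚ := fun i => σ * (2 * ξ i) with hsdef
      have hs1 : ∀ i, s i = 1 ∨ s i = -1 := by
        intro i
        rcases hσ with h | h <;> rcases hval i with h2 | h2 <;>
          simp only [hsdef, h, h2] <;> norm_num
      have hs6 : s 6 = 1 := by
        simp only [hsdef, hσdef]
        rcases hval 6 with h | h <;> rw [h] <;> norm_num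
      have hs7 : s 7 = 1 := by
        simp only [hsdef, hσdef]
        rw [← h67']
        rcases hval 6 with h | h <;> rw [h] <;> norm_num
      have hxs : ξ = (σ / 2) • s := by
        funext t
        show ξ t = σ / 2 * (σ * (2 * ξ t))
        rcases hσ with h | h <;> rw [h] <;> ring
      -- parity
      have key : Even (Finset.univ.filter (fun i : Fin 8 => i.val < 6 ∧ w i = -1)).card := by
        set c := (Finset.univ.filter (fun i : Fin 8 => i.val < 6 ∧ w i = -1)).card with hc
        have hsb : ∑ i : Fin 8, (if i.val < 6 ∧ w i = -1 then (1:ℚ) else 0) = c := by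
          rw [Finset.sum_boole, hc]
        rw [Fin.sum_univ_eight] at hsb
        have e6 : (if (6:Fin 8).val < 6 ∧ w 6 = -1 then (1:ℚ) else 0) = 0 := by
          rw [if_neg]; rintro ⟨h, -⟩; exact absurd h (by decide)
        have e7 : (if (7:Fin 8).val < 6 ∧ w 7 = -1 then (1:ℚ) else 0) = 0 := by
          rw [if_neg]; rintro ⟨h, -⟩; exact absurd h (by decide)
        have gen : ∀ (i : Fin 8), i.val < 6 →
            (if i.val < 6 ∧ w i = -1 then (1:ℚ) else 0) = -(w i) := by
          intro i hi
          rcases hw01 i hi with h | h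
          · rw [if_neg, h]; · norm_num
            rintro ⟨-, h2⟩; rw [h] at h2; norm_num at h2
          · rw [if_pos ⟨hi, h⟩, h]; norm_num
        rw [gen 0 (by decide), gen 1 (by decide), gen 2 (by decide), gen 3 (by decide),
          gen 4 (by decide), gen 5 (by decide), e6, e7] at hsb
        have hcq : (c:ℚ) = -(2 * m) := by rw [← hsb]; linarith
        have hcz : (c:ℤ) = -(2 * m) := by exact_mod_cast hcq
        have : Even (c:ℤ) := ⟨-m, by omega⟩
        exact_mod_cast this
      have hpar : Even (Finset.univ.filter (fun i : Fin 8 => i.val < 6 ∧ s i = -1)).card := by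
        rcases hσ with h | h
        · have : (Finset.univ.filter (fun i : Fin 8 => i.val < 6 ∧ s i = -1))
              = (Finset.univ.filter (fun i : Fin 8 => i.val < 6 ∧ w i = -1)) := by
            apply Finset.filter_congr
            intro i _
            apply and_congr_right
            intro hi
            have : s i = 2 * w i + 1 := by
              simp only [hsdef, h, hξ]; ring
            rw [this]
            constructor
            · intro h2; linarith
            · intro h2; rw [h2]; norm_num
          rw [this]; exact key
        · -- σ = -1 : s i = -1 ↔ w i = 0 for i < 6
          have hflip : (Finset.univ.filter (fun i : Fin 8 => i.val < 6 ∧ s i = -1))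
              = (Finset.univ.filter (fun i : Fin 8 => i.val < 6 ∧ w i = 0)) := by
            apply Finset.filter_congr
            intro i _
            apply and_congr_right
            intro hi
            have : s i = -(2 * w i + 1) := by
              simp only [hsdef, h, hξ]; ring
            rw [this]
            constructor
            · intro h2; linarith
            · intro h2; rw [h2]; norm_num
          rw [hflip]
          have hsplit :
              (Finset.univ.filter (fun i : Fin 8 => i.val < 6 ∧ w i = 0)).card
              + (Finset.univ.filter (fun i : Fin 8 => i.val < 6 ∧ w i = -1)).card = 6 := by
            have h1 : (Finset.univ.filter (fun i : Fin 8 => i.val < 6 ∧ w i = 0))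
                = (Finset.univ.filter (fun i : Fin 8 => i.val < 6)).filter
                    (fun i => w i = 0) := by
              rw [Finset.filter_filter]
            have h2 : (Finset.univ.filter (fun i : Fin 8 => i.val < 6 ∧ w i = -1))
                = (Finset.univ.filter (fun i : Fin 8 => i.val < 6)).filter
                    (fun i => ¬ (w i = 0)) := by
              rw [Finset.filter_filter]
              apply Finset.filter_congr
              intro i _
              apply and_congr_right
              intro hi
              rcases hw01 i hi with hh | hh
              · constructor
                · intro h3; rw [hh] at h3; norm_num at h3
                · intro h3; exact absurd hh h3
              · constructor
                · intro _; rw [hh]; norm_num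
                · intro _; exact hh
            rw [h1, h2, Finset.card_filter_add_card_filter_not]
            decide
          obtain ⟨n, hn⟩ := key
          rw [Nat.even_iff] at *
          omega
      refine ⟨ξ, Or.inr (Or.inr ⟨σ, s, hσ, hs1, hs6, hs7, hpar, hxs⟩), ?_⟩
      have hsq : ∀ t : Fin 8, ξ t * ξ t = 1/4 := by
        intro t; rcases hval t with h | h <;> rw [h] <;> norm_num
      rw [dot, Fin.sum_univ_eight, hsq, hsq, hsq, hsq, hsq, hsq, hsq, hsq]
      norm_num

lemma claimD {ξ : V 8} (hξ : ξ ∈ XiE7) (h0 : ξ ≠ 0) :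
    ∃ α ∈ e7roots, 2 ≤ dot α ξ := by
  rcases hξ with h | ⟨w, hw, rfl⟩
  · exact claimD_A h h0
  · exact claimD_B hw

def lamStar : V 8 := ![1, 0, 0, 0, 0, 0, 1/2, 1/2]

lemma lamStar_vals : lamStar 0 = 1 ∧ lamStar 1 = 0 ∧ lamStar 2 = 0 ∧ lamStar 3 = 0 ∧
    lamStar 4 = 0 ∧ lamStar 5 = 0 ∧ lamStar 6 = 1/2 ∧ lamStar 7 = 1/2 := by
  refine ⟨rfl, rfl, rfl, rfl, rfl, rfl, rfl, rfl⟩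

lemma lamStar_zero_of {t : Fin 8} (ht : t.val < 6) (ht0 : t ≠ 0) : lamStar t = 0 := by
  fin_cases t
  · exact absurd rfl ht0
  · rfl
  · rfl
  · rfl
  · rfl
  · rfl
  · exact absurd ht (by decide)
  · exact absurd ht (by decide)

lemma pairing {α : V 8} (hα : α ∈ e7roots) : -1 ≤ dot α lamStar := by
  obtain ⟨h0, h1, h2, h3, h4, h5, h6, h7⟩ := lamStar_vals
  rcases hα with ⟨i, j, hi, hj, hij, a, b, ha, hb, rfl⟩ | (rfl | rfl) | ⟨e, s, he, hs, hs6, hs7, _, rfl⟩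
  · rw [dot_pm]
    by_cases hi0 : i = 0
    · have hj0 : j ≠ 0 := fun hc => hij (by rw [hi0, hc])
      rw [hi0, h0, lamStar_zero_of hj hj0]
      rcases ha with rfl | rfl <;> norm_num
    · rw [lamStar_zero_of hi hi0]
      by_cases hj0 : j = 0
      · rw [hj0, h0]
        rcases hb with rfl | rfl <;> norm_num
      · rw [lamStar_zero_of hj hj0]
        norm_num
  · rw [dot_67, h6, h7]; norm_num
  · rw [dot_neg_left, dot_67, h6, h7]; norm_num
  · rw [dot_smul_left, dot, Fin.sum_univ_eight, h0, h1, h2, h3, h4, h5, h6, h7, hs6, hs7]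
    rcases he with rfl | rfl <;> rcases hs 0 with h | h <;> rw [h] <;> norm_num

lemma XiZero_sub {u v : V 8} (hu : u ∈ XiZeroE7) (hv : v ∈ XiZeroE7) :
    u - v ∈ XiZeroE7 := by
  obtain ⟨hiu, ⟨mu, hsu⟩, h67u⟩ := hu
  obtain ⟨hiv, ⟨mv, hsv⟩, h67v⟩ := hv
  refine ⟨fun t => ?_, ⟨mu - mv, ?_⟩, ?_⟩
  · obtain ⟨a, hha⟩ := hiu t
    obtain ⟨b, hhb⟩ := hiv t
    exact ⟨a - b, by rw [Pi.sub_apply, hha, hhb]; push_cast; ring⟩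
  · simp only [Pi.sub_apply]; push_cast; linarith
  · simp only [Pi.sub_apply]; rw [h67u, h67v]

lemma one_mem_XiZero : (fun _ => (1:ℚ)) ∈ XiZeroE7 :=
  ⟨fun _ => ⟨1, by norm_num⟩, ⟨3, by norm_num⟩, rfl⟩

lemma Xi_sub {u v : V 8} (hu : u ∈ XiE7) (hv : v ∈ XiE7) : u - v ∈ XiE7 := by
  rcases hu with hu | ⟨a, ha, rfl⟩ <;> rcases hv with hv | ⟨b, hb, rfl⟩
  · exact Or.inl (XiZero_sub hu hv)
  · refine Or.inr ⟨u - b - (fun _ => (1:ℚ)), XiZero_sub (XiZero_sub hu hb) one_mem_XiZero, ?_⟩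
    funext t
    simp only [Pi.sub_apply, Pi.add_apply]
    ring
  · exact Or.inr ⟨a - v, XiZero_sub ha hv, by abel⟩
  · have : a + (fun _ => (1/2:ℚ)) - (b + fun _ => (1/2:ℚ)) = a - b := by abel
    rw [this]
    exact Or.inl (XiZero_sub ha hb)

lemma sum_single_eight (i : Fin 8) : ∑ t : Fin 8, (Pi.single i 1 : V 8) t = 1 := by
  rw [Finset.sum_eq_single i]
  · simp
  · intro b _ hb; simp [Pi.single_apply, hb]
  · simp

lemma single_eval_ne {i t : Fin 8} (h : t ≠ i) : (Pi.single i 1 : V 8) t = 0 := by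
  simp [Pi.single_apply, h]

lemma pm_apply (i j : Fin 8) (a b : ℚ) (t : Fin 8) :
    (a • (Pi.single i 1 : V 8) + b • (Pi.single j 1 : V 8)) t
      = (if t = i then a else 0) + (if t = j then b else 0) := by
  simp [Pi.single_apply, mul_ite, mul_one, mul_zero]

lemma roots_subset_Xi {α : V 8} (hα : α ∈ e7roots) : α ∈ XiE7 := by
  rcases hα with ⟨i, j, hi, hj, hij, a, b, ha, hb, rfl⟩ | (rfl | rfl) | ⟨e, s, he, hs, hs6, hs7, hev, rfl⟩
  · refine Or.inl ⟨fun t => ?_, ?_, ?_⟩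
    · have hav : ∃ za : ℤ, a = (za:ℚ) := by rcases ha with rfl | rfl; exacts [⟨1, by norm_num⟩, ⟨-1, by norm_num⟩]
      have hbv : ∃ zb : ℤ, b = (zb:ℚ) := by rcases hb with rfl | rfl; exacts [⟨1, by norm_num⟩, ⟨-1, by norm_num⟩]
      obtain ⟨za, rfl⟩ := hav
      obtain ⟨zb, rfl⟩ := hbv
      rw [pm_apply]
      by_cases hti : t = i <;> by_cases htj : t = j
      · exact absurd (hti.symm.trans htj) hij
      · exact ⟨za, by rw [if_pos hti, if_neg htj]; norm_num⟩
      · exact ⟨zb, by rw [if_neg hti, if_pos htj]; norm_num⟩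
      · exact ⟨0, by rw [if_neg hti, if_neg htj]; norm_num⟩
    · have htot : ∑ t : Fin 8, (a • (Pi.single i 1 : V 8) + b • (Pi.single j 1 : V 8)) t
          = a + b := by
        simp only [Pi.add_apply, Pi.smul_apply, smul_eq_mul]
        rw [Finset.sum_add_distrib, ← Finset.mul_sum, ← Finset.mul_sum,
          sum_single_eight, sum_single_eight]
        ring
      have h6 : (a • (Pi.single i 1 : V 8) + b • (Pi.single j 1 : V 8)) 6 = 0 := by
        have hi6 : (6 : Fin 8) ≠ i := fun h => by rw [← h] at hi; exact absurd hi (by decide)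
        have hj6 : (6 : Fin 8) ≠ j := fun h => by rw [← h] at hj; exact absurd hj (by decide)
        simp [single_eval_ne hi6, single_eval_ne hj6]
      have h7 : (a • (Pi.single i 1 : V 8) + b • (Pi.single j 1 : V 8)) 7 = 0 := by
        have hi7 : (7 : Fin 8) ≠ i := fun h => by rw [← h] at hi; exact absurd hi (by decide)
        have hj7 : (7 : Fin 8) ≠ j := fun h => by rw [← h] at hj; exact absurd hj (by decide)
        simp [single_eval_ne hi7, single_eval_ne hj7]
      rw [Fin.sum_univ_eight, h6, h7] at htot
      have hm : ∃ m : ℤ, a + b = 2 * (m:ℚ) := by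
        rcases ha with rfl | rfl <;> rcases hb with rfl | rfl
        exacts [⟨1, by norm_num⟩, ⟨0, by norm_num⟩, ⟨0, by norm_num⟩, ⟨-1, by norm_num⟩]
      obtain ⟨m, hm⟩ := hm
      exact ⟨m, by linarith⟩
    · have hi6 : (6 : Fin 8) ≠ i := fun h => by rw [← h] at hi; exact absurd hi (by decide)
      have hj6 : (6 : Fin 8) ≠ j := fun h => by rw [← h] at hj; exact absurd hj (by decide)
      have hi7 : (7 : Fin 8) ≠ i := fun h => by rw [← h] at hi; exact absurd hi (by decide)
      have hj7 : (7 : Fin 8) ≠ j := fun h => by rw [← h] at hj; exact absurd hj (by decide)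
      simp [single_eval_ne hi6, single_eval_ne hj6, single_eval_ne hi7, single_eval_ne hj7]
  · refine Or.inl ⟨fun t => ?_, ⟨0, ?_⟩, ?_⟩
    · simp only [Pi.add_apply, Pi.single_apply]
      by_cases h6 : t = 6 <;> by_cases h7 : t = 7
      · exact ⟨1, by norm_num [h6, h7, show ¬(6:Fin 8)=7 from by decide, show ¬(7:Fin 8)=6 from by decide]⟩
      · exact ⟨1, by norm_num [h6, h7, show ¬(6:Fin 8)=7 from by decide, show ¬(7:Fin 8)=6 from by decide]⟩
      · exact ⟨1, by norm_num [h6, h7, show ¬(6:Fin 8)=7 from by decide, show ¬(7:Fin 8)=6 from by decide]⟩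
      · exact ⟨0, by norm_num [h6, h7, show ¬(6:Fin 8)=7 from by decide, show ¬(7:Fin 8)=6 from by decide]⟩
    · simp [Pi.single_apply]
    · simp [Pi.single_apply, (by decide : (6:Fin 8) ≠ 7), (by decide : (7:Fin 8) ≠ 6)]
  · refine Or.inl ⟨fun t => ?_, ⟨0, ?_⟩, ?_⟩
    · simp only [Pi.neg_apply, Pi.add_apply, Pi.single_apply]
      by_cases h6 : t = 6 <;> by_cases h7 : t = 7
      · exact ⟨-1, by norm_num [h6, h7, show ¬(6:Fin 8)=7 from by decide, show ¬(7:Fin 8)=6 from by decide]⟩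
      · exact ⟨-1, by norm_num [h6, h7, show ¬(6:Fin 8)=7 from by decide, show ¬(7:Fin 8)=6 from by decide]⟩
      · exact ⟨-1, by norm_num [h6, h7, show ¬(6:Fin 8)=7 from by decide, show ¬(7:Fin 8)=6 from by decide]⟩
      · exact ⟨0, by norm_num [h6, h7, show ¬(6:Fin 8)=7 from by decide, show ¬(7:Fin 8)=6 from by decide]⟩
    · simp [Pi.single_apply]
    · simp [Pi.single_apply, (by decide : (6:Fin 8) ≠ 7), (by decide : (7:Fin 8) ≠ 6)]
  · -- half root
    refine Or.inr ⟨fun t => (e * s t - 1)/2, ⟨fun t => ?_, ?_, ?_⟩, ?_⟩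
    · show ∃ m : ℤ, (e * s t - 1)/2 = (m:ℚ)
      rcases he with rfl | rfl <;> rcases hs t with h | h <;> rw [h]
      · exact ⟨0, by norm_num⟩
      · exact ⟨-1, by norm_num⟩
      · exact ⟨-1, by norm_num⟩
      · exact ⟨0, by norm_num⟩
    · -- sum of first six is even
      set c := (Finset.univ.filter (fun i : Fin 8 => i.val < 6 ∧ s i = -1)).card with hcdef
      have hsb : ∑ t : Fin 8, (if t.val < 6 ∧ s t = -1 then (1:ℚ) else 0) = c := by
        rw [Finset.sum_boole, hcdef]
      have gen : ∀ (t : Fin 8), t.val < 6 →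
          (if t.val < 6 ∧ s t = -1 then (1:ℚ) else 0) = (1 - s t)/2 := by
        intro t ht
        rcases hs t with h | h
        · rw [if_neg, h]; · norm_num
          rintro ⟨-, h2⟩; rw [h] at h2; norm_num at h2
        · rw [if_pos ⟨ht, h⟩, h]; norm_num
      have e6 : (if (6:Fin 8).val < 6 ∧ s 6 = -1 then (1:ℚ) else 0) = 0 := by
        rw [if_neg]; rintro ⟨h, -⟩; exact absurd h (by decide)
      have e7' : (if (7:Fin 8).val < 6 ∧ s 7 = -1 then (1:ℚ) else 0) = 0 := by
        rw [if_neg]; rintro ⟨h, -⟩; exact absurd h (by decide)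
      rw [Fin.sum_univ_eight, gen 0 (by decide), gen 1 (by decide), gen 2 (by decide),
        gen 3 (by decide), gen 4 (by decide), gen 5 (by decide), e6, e7'] at hsb
      obtain ⟨n, hn⟩ := hev
      have hcq : (c:ℚ) = (n:ℚ) + (n:ℚ) := by rw [hn]; push_cast; ring
      rcases he with rfl | rfl
      · exact ⟨-n, by push_cast; linarith⟩
      · exact ⟨n - 3, by push_cast; linarith⟩
    · show (e * s 6 - 1)/2 = (e * s 7 - 1)/2
      rw [hs6, hs7]
    · funext t
      show (e/2) * s t = (e * s t - 1)/2 + 1/2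
      ring

lemma dot_self_int {ξ : V 8} (hξ : ξ ∈ XiE7) : ∃ z : ℤ, dot ξ ξ = (z:ℚ) := by
  rcases hξ with ⟨hint, -, -⟩ | ⟨w, ⟨hint, -, -⟩, rfl⟩
  · choose k hk using hint
    refine ⟨k 0 * k 0 + k 1 * k 1 + k 2 * k 2 + k 3 * k 3 + k 4 * k 4 + k 5 * k 5
      + k 6 * k 6 + k 7 * k 7, ?_⟩
    rw [dot, Fin.sum_univ_eight, hk 0, hk 1, hk 2, hk 3, hk 4, hk 5, hk 6, hk 7]
    push_cast; ring
  · choose k hk using hint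
    have ht : ∀ t : Fin 8, ((w + fun _ => (1/2:ℚ)) : V 8) t = (k t : ℚ) + 1/2 := by
      intro t; show w t + 1/2 = _; rw [hk]
    refine ⟨(k 0 * k 0 + k 0) + (k 1 * k 1 + k 1) + (k 2 * k 2 + k 2) + (k 3 * k 3 + k 3)
      + (k 4 * k 4 + k 4) + (k 5 * k 5 + k 5) + (k 6 * k 6 + k 6) + (k 7 * k 7 + k 7) + 2, ?_⟩
    rw [dot, Fin.sum_univ_eight, ht 0, ht 1, ht 2, ht 3, ht 4, ht 5, ht 6, ht 7]
    push_cast; ring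

lemma XiZero_subset_span {v : V 8} (hv : v ∈ XiZeroE7) :
    v ∈ Submodule.span ℤ e7roots := by
  obtain ⟨hint, ⟨m, hsum⟩, h67⟩ := hv
  choose k hk using hint
  have hsumZ : (k 0 : ℚ) + k 1 + k 2 + k 3 + k 4 + k 5 = 2 * m := by
    rw [← hk 0, ← hk 1, ← hk 2, ← hk 3, ← hk 4, ← hk 5]; exact hsum
  have h7k : (k 7 : ℚ) = (k 6 : ℚ) := by rw [← hk 6, ← hk 7, h67]
  have hsZ : k 0 + k 1 + k 2 + k 3 + k 4 + k 5 = 2 * m := by exact_mod_cast hsumZ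
  have h7kZ : k 7 = k 6 := by exact_mod_cast h7k
  set d0 : V 8 := (1:ℚ) • (Pi.single 0 1 : V 8) + (-1:ℚ) • (Pi.single 5 1 : V 8) with hd0
  set d1 : V 8 := (1:ℚ) • (Pi.single 1 1 : V 8) + (-1:ℚ) • (Pi.single 5 1 : V 8) with hd1
  set d2 : V 8 := (1:ℚ) • (Pi.single 2 1 : V 8) + (-1:ℚ) • (Pi.single 5 1 : V 8) with hd2
  set d3 : V 8 := (1:ℚ) • (Pi.single 3 1 : V 8) + (-1:ℚ) • (Pi.single 5 1 : V 8) with hd3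
  set d4 : V 8 := (1:ℚ) • (Pi.single 4 1 : V 8) + (-1:ℚ) • (Pi.single 5 1 : V 8) with hd4
  set g : V 8 := Pi.single 6 1 + Pi.single 7 1 with hg
  set p : V 8 := (1:ℚ) • (Pi.single 4 1 : V 8) + (1:ℚ) • (Pi.single 5 1 : V 8) with hp
  set q : V 8 := (-1:ℚ) • (Pi.single 4 1 : V 8) + (1:ℚ) • (Pi.single 5 1 : V 8) with hq
  have hd0m : d0 ∈ e7roots := mem_roots_pm (by decide) (by decide) (by decide) (Or.inl rfl) (Or.inr rfl)
  have hd1m : d1 ∈ e7roots := mem_roots_pm (by decide) (by decide) (by decide) (Or.inl rfl) (Or.inr rfl)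
  have hd2m : d2 ∈ e7roots := mem_roots_pm (by decide) (by decide) (by decide) (Or.inl rfl) (Or.inr rfl)
  have hd3m : d3 ∈ e7roots := mem_roots_pm (by decide) (by decide) (by decide) (Or.inl rfl) (Or.inr rfl)
  have hd4m : d4 ∈ e7roots := mem_roots_pm (by decide) (by decide) (by decide) (Or.inl rfl) (Or.inr rfl)
  have hgm : g ∈ e7roots := mem_roots_67
  have hpm : p ∈ e7roots := mem_roots_pm (by decide) (by decide) (by decide) (Or.inl rfl) (Or.inl rfl)
  have hqm : q ∈ e7roots := mem_roots_pm (by decide) (by decide) (by decide) (Or.inr rfl) (Or.inl rfl)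
  have hveq : v = k 0 • d0 + k 1 • d1 + k 2 • d2 + k 3 • d3 + k 4 • d4 + k 6 • g
      + m • p + m • q := by
    funext t
    simp only [hd0, hd1, hd2, hd3, hd4, hg, hp, hq, Pi.add_apply, Pi.smul_apply,
      smul_eq_mul, zsmul_eq_mul, Pi.single_apply]
    fin_cases t <;> simp [hk] <;> push_cast <;> first | omega | linarith [hsumZ, h7k]
  rw [hveq]
  have sp : ∀ r ∈ e7roots, r ∈ Submodule.span ℤ e7roots := fun r hr => Submodule.subset_span hr
  exact Submodule.add_mem _ (Submodule.add_mem _ (Submodule.add_mem _ (Submodule.add_mem _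
    (Submodule.add_mem _ (Submodule.add_mem _ (Submodule.smul_mem _ _ (sp _ hd0m))
      (Submodule.smul_mem _ _ (sp _ hd1m))) (Submodule.smul_mem _ _ (sp _ hd2m)))
      (Submodule.smul_mem _ _ (sp _ hd3m))) (Submodule.smul_mem _ _ (sp _ hd4m)))
      (Submodule.smul_mem _ _ (sp _ hgm))) (Submodule.smul_mem _ _ (sp _ hpm))
    |> fun h => Submodule.add_mem _ h (Submodule.smul_mem _ _ (sp _ hqm))

lemma halfvec_root : (fun _ => (1/2:ℚ)) ∈ e7roots := by
  refine Or.inr (Or.inr ⟨1, fun _ => 1, Or.inl rfl, fun _ => Or.inl rfl, rfl, rfl, ?_, ?_⟩)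
  · have : (Finset.univ.filter (fun i : Fin 8 => i.val < 6 ∧ (1:ℚ) = -1)) = ∅ := by
      apply Finset.filter_false_of_mem
      rintro i - ⟨-, h⟩
      norm_num at h
    rw [this]
    simp
  · funext t; show (1/2:ℚ) = 1/2 * 1; ring

lemma Xi_subset_span {v : V 8} (hv : v ∈ XiE7) : v ∈ Submodule.span ℤ e7roots := by
  rcases hv with hv | ⟨w, hw, rfl⟩
  · exact XiZero_subset_span hv
  · exact Submodule.add_mem _ (XiZero_subset_span hw) (Submodule.subset_span halfvec_root)


lemma key_induction : ∀ n : ℕ, ∀ ξ : V 8, ξ ∈ XiE7 → dot ξ ξ = (n:ℚ) →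
    lamStar ∈ weightPolytope e7roots (lamStar + ξ) := by
  intro n
  induction n using Nat.strong_induction_on with
  | _ n ih =>
    intro ξ hξ hn
    by_cases h0 : ξ = 0
    · subst h0
      have h : lamStar + (0 : V 8) = lamStar := by abel
      rw [h]
      exact self_mem_polytope _ _
    · obtain ⟨α, hα, h2⟩ := claimD hξ h0
      have hnorm := root_norm hα
      have hpair := pairing hα
      have hαl : 1 ≤ dot α (lamStar + ξ) := by rw [dot_add_right]; linarith
      have hstep := step_mem_polytope hα hnorm hαl
      have hξ' : ξ - α ∈ XiE7 := Xi_sub hξ (roots_subset_Xi hα)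
      obtain ⟨z, hz⟩ := dot_self_int hξ'
      have hz0 : (0:ℚ) ≤ (z:ℚ) := by rw [← hz]; exact dot_self_nonneg _
      have hzz : 0 ≤ z := by exact_mod_cast hz0
      have hval : dot (ξ - α) (ξ - α) = (n:ℚ) - 2 * dot α ξ + 2 := by
        rw [dot_sub_right, dot_comm (ξ - α) ξ, dot_comm (ξ - α) α, dot_sub_right,
          dot_sub_right, hn, hnorm, dot_comm ξ α]
        ring
      have hle : (z:ℚ) ≤ (n:ℚ) - 2 := by rw [← hz, hval]; linarith
      have hzn : z.toNat < n := by
        have h2' : z ≤ (n:ℤ) - 2 := by exact_mod_cast hle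
        omega
      have hcast : ((z.toNat : ℕ) : ℚ) = (z:ℚ) := by exact_mod_cast Int.toNat_of_nonneg hzz
      have hind := ih z.toNat hzn (ξ - α) hξ' (by rw [hz, ← hcast])
      have heq : lamStar + (ξ - α) = lamStar + ξ - α := by abel
      rw [heq] at hind
      exact polytope_mono hstep hind


/-- For every `λ ∈ Λ \ Ξ` (weight lattice minus root lattice of `E₇`), the set
`M_{E₇}(λ)` contains the vector `λ* = (1,0,0,0,0,0,1/2,1/2)`. -/
theorem e7_lamStar_mem (l : V 8) (hl : l ∈ LamE7) (hnl : l ∉ XiE7) :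
    ![1, 0, 0, 0, 0, 0, 1/2, 1/2] ∈ Mset e7roots l := by
  rcases hl with hl | ⟨w, hw, rfl⟩
  · exact absurd hl hnl
  have hlam : (![1, 0, 0, 0, 0, 0, 1/2, 1/2] : V 8) = lamStar := rfl
  rw [hlam]
  set μ : V 8 := ![1/2, 1/2, 1/2, -1/2, -1/2, -1/2, 0, 0] with hμ
  have hν : (![1/2, -1/2, -1/2, 1/2, 1/2, 1/2, 1/2, 1/2] : V 8) ∈ XiE7 := by
    refine Or.inr ⟨![0, -1, -1, 0, 0, 0, 0, 0],
      ⟨fun t => ?_, ⟨-1, by show (0:ℚ) + -1 + -1 + 0 + 0 + 0 = 2 * ((-1:ℤ):ℚ); norm_num⟩,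
        by show (0:ℚ) = 0; rfl⟩, ?_⟩
    · fin_cases t
      · exact ⟨0, by show (0:ℚ) = ((0:ℤ):ℚ); norm_num⟩
      · exact ⟨-1, by show (-1:ℚ) = ((-1:ℤ):ℚ); norm_num⟩
      · exact ⟨-1, by show (-1:ℚ) = ((-1:ℤ):ℚ); norm_num⟩
      · exact ⟨0, by show (0:ℚ) = ((0:ℤ):ℚ); norm_num⟩
      · exact ⟨0, by show (0:ℚ) = ((0:ℤ):ℚ); norm_num⟩
      · exact ⟨0, by show (0:ℚ) = ((0:ℤ):ℚ); norm_num⟩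
      · exact ⟨0, by show (0:ℚ) = ((0:ℤ):ℚ); norm_num⟩
      · exact ⟨0, by show (0:ℚ) = ((0:ℤ):ℚ); norm_num⟩
    · funext t
      fin_cases t
      · show (1/2:ℚ) = 0 + 1/2; norm_num
      · show (-1/2:ℚ) = -1 + 1/2; norm_num
      · show (-1/2:ℚ) = -1 + 1/2; norm_num
      · show (1/2:ℚ) = 0 + 1/2; norm_num
      · show (1/2:ℚ) = 0 + 1/2; norm_num
      · show (1/2:ℚ) = 0 + 1/2; norm_num
      · show (1/2:ℚ) = 0 + 1/2; norm_num
      · show (1/2:ℚ) = 0 + 1/2; norm_num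
  have hξ : (w + μ) - lamStar ∈ XiE7 := by
    have hmu : lamStar - μ = ![1/2, -1/2, -1/2, 1/2, 1/2, 1/2, 1/2, 1/2] := by
      funext t
      fin_cases t
      · show (1:ℚ) - 1/2 = 1/2; norm_num
      · show (0:ℚ) - 1/2 = -1/2; norm_num
      · show (0:ℚ) - 1/2 = -1/2; norm_num
      · show (0:ℚ) - (-1/2) = 1/2; norm_num
      · show (0:ℚ) - (-1/2) = 1/2; norm_num
      · show (0:ℚ) - (-1/2) = 1/2; norm_num
      · show (1/2:ℚ) - 0 = 1/2; norm_num
      · show (1/2:ℚ) - 0 = 1/2; norm_num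
    have heq : (w + μ) - lamStar = w - (lamStar - μ) := by abel
    rw [heq, hmu]
    exact Xi_sub hw hν
  constructor
  · show lamStar - (w + μ) ∈ Submodule.span ℤ e7roots
    have heq : lamStar - (w + μ) = -((w + μ) - lamStar) := by abel
    rw [heq]
    exact Submodule.neg_mem _ (Xi_subset_span hξ)
  · obtain ⟨z, hz⟩ := dot_self_int hξ
    have hz0 : (0:ℚ) ≤ (z:ℚ) := by rw [← hz]; exact dot_self_nonneg _
    have hzz : 0 ≤ z := by exact_mod_cast hz0
    have hcast : ((z.toNat : ℕ) : ℚ) = (z:ℚ) := by exact_mod_cast Int.toNat_of_nonneg hzz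
    have h := key_induction z.toNat _ hξ (by rw [hz, ← hcast])
    have heq : lamStar + ((w + μ) - lamStar) = w + μ := by abel
    rw [heq] at h
    exact h

end TorusNormal
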